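/- arXiv:math/0210075 — 4 statements merged into one kernel-verified Lean document; each statement's English description precedes it below -/
import Mathlib

section
/- For polynomials f and g over a commutative ring R, if n is the degree of g, then c(fg)·c(f)^n = c(f)^{n+1}·c(g), where c(h) denotes the content ideal of h (the ideal generated by the coefficients of h). -/
open Polynomial

/-- The content ideal of a polynomial: the ideal generated by its coefficients. -/
noncomputable def cont {R : Type*} [CommRing R] (p : R[X]) : Ideal R :=
  Ideal.span (Set.range p.coeff)

/-- The minimal number of generators of an ideal. -/
noncomputable def mug {R : Type*} [CommRing R] (I : Ideal R) : ℕ :=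
  sInf {n | ∃ x : Fin n → R, Ideal.span (Set.range x) = I}

/-- The Dedekind--Mertens number of a polynomial. -/
noncomputable def dmNumber (R : Type*) [CommRing R] (g : R[X]) : ℕ :=
  sInf {k | 0 < k ∧ ∀ f : R[X], cont (f * g) * cont f ^ (k - 1) = cont f ^ k * cont g}

/-- The polarized Dedekind--Mertens number of a polynomial. -/
noncomputable def polDmNumber (R : Type*) [CommRing R] (g : R[X]) : ℕ :=
  sInf {k | 0 < k ∧ ∀ f : Fin k → R[X],
    (∑ i, cont (f i * g) * ∏ j ∈ Finset.univ.erase i, cont (f j)) =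
      (∏ i, cont (f i)) * cont g}

/-- `x` is in the integral closure of the ideal `I`. -/
def memIntCl {R : Type*} [CommRing R] (I : Ideal R) (x : R) : Prop :=
  ∃ k : ℕ, 0 < k ∧ ∃ a : ℕ → R, (∀ i, 1 ≤ i → i ≤ k → a i ∈ I ^ i) ∧
    x ^ k + ∑ i ∈ Finset.Icc 1 k, a i * x ^ (k - i) = 0

section DM

variable {R : Type*} [CommRing R]

lemma coeff_mem_cont (p : R[X]) (k : ℕ) : p.coeff k ∈ cont p :=
  Ideal.subset_span ⟨k, rfl⟩

lemma cont_mul_le (p q : R[X]) : cont (p * q) ≤ cont p * cont q := by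
  rw [cont, Ideal.span_le]
  rintro _ ⟨k, rfl⟩
  rw [coeff_mul]
  exact Submodule.sum_mem _ fun c _ =>
    Ideal.mul_mem_mul (coeff_mem_cont p c.1) (coeff_mem_cont q c.2)

/-- base case: `g` of degree `0`. -/
lemma dm_base (f g : R[X]) (h : g.natDegree = 0) :
    cont f * cont g ≤ cont (f * g) := by
  have hg : g = C (g.coeff 0) := eq_C_of_natDegree_eq_zero h
  set a := g.coeff 0 with ha
  -- cont g ≤ span {a}
  have hG : cont g ≤ Ideal.span {a} := by
    rw [cont, Ideal.span_le]
    rintro _ ⟨k, rfl⟩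
    rcases Nat.eq_zero_or_pos k with hk | hk
    · subst hk; exact Ideal.subset_span rfl
    · have : g.coeff k = 0 := by
        rw [hg, coeff_C, if_neg (Nat.pos_iff_ne_zero.mp hk)]
      rw [this]; exact zero_mem _
  refine le_trans (Ideal.mul_mono_right hG) (Ideal.mul_le.2 ?_)
  intro r hr z hz
  obtain ⟨t, rfl⟩ := Ideal.mem_span_singleton'.1 hz
  have key : ∀ r ∈ cont f, r * a ∈ cont (f * g) := by
    intro r hr
    induction hr using Submodule.span_induction with
    | mem x hx =>
      obtain ⟨i, rfl⟩ := hx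
      have : f.coeff i * a = (f * g).coeff i := by
        rw [hg, coeff_mul_C]
      rw [this]; exact coeff_mem_cont _ _
    | zero => simp
    | add x y _ _ hx hy => rw [add_mul]; exact add_mem hx hy
    | smul t x _ hx =>
      rw [smul_eq_mul, mul_assoc]
      exact Ideal.mul_mem_left _ _ hx
  have : r * (t * a) = t * (r * a) := by ring
  rw [this]
  exact Ideal.mul_mem_left _ _ (key r hr)

/-- The hard inclusion, by strong induction on the degree of `g`. -/
lemma dm_hard (f : R[X]) :
    ∀ (N : ℕ) (g : R[X]), g.natDegree ≤ N →
      cont f ^ (g.natDegree + 1) * cont g ≤ cont (f * g) * cont f ^ g.natDegree := by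
  intro N
  induction N with
  | zero =>
    intro g hg
    have h0 : g.natDegree = 0 := Nat.le_zero.1 hg
    rw [h0, pow_one, pow_zero, mul_one]
    exact dm_base f g h0
  | succ N ihN =>
    intro g hgN
    rcases Nat.eq_zero_or_pos g.natDegree with h0 | hpos
    · rw [h0, pow_one, pow_zero, mul_one]
      exact dm_base f g h0
    obtain ⟨m, hm⟩ : ∃ m, g.natDegree = m + 1 :=
      ⟨g.natDegree - 1, (Nat.succ_pred_eq_of_pos hpos).symm⟩
    set n := g.natDegree with hn
    set b := g.leadingCoeff with hb
    set g₁ := g.eraseLead with hg₁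
    -- coefficients of g₁ vanish in degrees ≥ n
    have hG0 : ∀ v, n ≤ v → g₁.coeff v = 0 := by
      intro v hv
      rcases eq_or_lt_of_le hv with h | h
      · rw [hg₁, eraseLead_coeff, if_pos h.symm]
      · rw [hg₁, eraseLead_coeff, if_neg (by omega)]
        exact coeff_eq_zero_of_natDegree_lt h
    -- f * g = f * g₁ + (f * C b) * X ^ n
    have hsplit : f * g = f * g₁ + f * C b * X ^ n := by
      conv_lhs => rw [← g.eraseLead_add_C_mul_X_pow]
      ring
    -- (α) : cont (f * g₁) ≤ cont (f*g) ⊔ span{b} * cont f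
    have hA1 : cont (f * g₁) ≤ cont (f * g) ⊔ Ideal.span {b} * cont f := by
      rw [cont, Ideal.span_le]
      rintro _ ⟨k, rfl⟩
      have hco : (f * g₁).coeff k = (f * g).coeff k - (f * C b * X ^ n).coeff k := by
        rw [hsplit]; simp
      rw [hco]
      apply sub_mem
      · exact Submodule.mem_sup_left (coeff_mem_cont _ _)
      · rw [coeff_mul_X_pow']
        split_ifs with hk
        · rw [coeff_mul_C, mul_comm (f.coeff (k - n)) b]
          exact Submodule.mem_sup_right
            (Ideal.mul_mem_mul (Ideal.mem_span_singleton_self b) (coeff_mem_cont f _))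
        · exact zero_mem _
    -- (γ₀) : (f*g).coeff (n+i) = (f*g₁).coeff (n+i) + b * f.coeff i
    have hγ : ∀ i, (f * g).coeff (n + i) = (f * g₁).coeff (n + i) + b * f.coeff i := by
      intro i
      rw [hsplit, coeff_add, coeff_mul_X_pow', if_pos (Nat.le_add_right n i)]
      rw [Nat.add_sub_cancel_left, coeff_mul_C, mul_comm (f.coeff i) b]
    -- outer induction hypothesis, adjusted
    have hd₁ : g₁.natDegree ≤ m := by
      show g.eraseLead.natDegree ≤ m
      have := g.eraseLead_natDegree_le
      omega
    have IH' : cont g₁ * cont f ^ (m + 1) ≤ cont (f * g₁) * cont f ^ m := by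
      have base := ihN g₁ (by omega)
      have hpow : cont f ^ (m + 1) =
          cont f ^ (m - g₁.natDegree) * cont f ^ (g₁.natDegree + 1) := by
        rw [← pow_add]; congr 1; omega
      have hpow2 : cont f ^ m =
          cont f ^ (m - g₁.natDegree) * cont f ^ g₁.natDegree := by
        rw [← pow_add]; congr 1; omega
      calc cont g₁ * cont f ^ (m + 1)
          = cont f ^ (m - g₁.natDegree) *
              (cont f ^ (g₁.natDegree + 1) * cont g₁) := by rw [hpow]; ring
        _ ≤ cont f ^ (m - g₁.natDegree) * (cont (f * g₁) * cont f ^ g₁.natDegree) :=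
            Ideal.mul_mono_right base
        _ = cont (f * g₁) * cont f ^ m := by rw [hpow2]; ring
    set K := cont (f * g) * cont f ^ n with hK
    -- key inner downward induction
    have key : ∀ d i, f.natDegree < i + d →
        ∀ x ∈ cont f ^ n, b * (f.coeff i * x) ∈ K := by
      intro d
      induction d with
      | zero =>
        intro i hi x hx
        rw [coeff_eq_zero_of_natDegree_lt (by omega)]
        simp
      | succ d ihd =>
        intro i hi x hx
        have helper : ∀ u, f.natDegree < u + d →
            ∀ y ∈ cont (f * g₁) * cont f ^ m, f.coeff u * y ∈ K := by
          intro u hu y hy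
          refine Submodule.mul_induction_on hy (fun p hp q hq => ?_)
            (fun y₁ y₂ hy₁ hy₂ => by rw [mul_add]; exact add_mem hy₁ hy₂)
          obtain ⟨p₁, h₁, p₂, h₂, rfl⟩ := Submodule.mem_sup.1 (hA1 hp)
          have e : f.coeff u * ((p₁ + p₂) * q) =
              p₁ * (f.coeff u * q) + f.coeff u * (p₂ * q) := by ring
          rw [e]
          apply add_mem
          · refine Ideal.mul_mem_mul h₁ ?_
            rw [hm, pow_succ, mul_comm (f.coeff u) q]
            exact Ideal.mul_mem_mul hq (coeff_mem_cont f u)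
          · refine Submodule.mul_induction_on h₂ (fun r hr s hs => ?_)
              (fun y₁ y₂ hy₁ hy₂ => by
                have e3 : f.coeff u * ((y₁ + y₂) * q) =
                    f.coeff u * (y₁ * q) + f.coeff u * (y₂ * q) := by ring
                rw [e3]; exact add_mem hy₁ hy₂)
            obtain ⟨t, rfl⟩ := Ideal.mem_span_singleton'.1 hr
            have e2 : f.coeff u * (t * b * s * q) =
                t * (b * (f.coeff u * (q * s))) := by ring
            rw [e2]
            refine Ideal.mul_mem_left _ _ (ihd u hu _ ?_)
            rw [hm, pow_succ]
            exact Ideal.mul_mem_mul hq hs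
        -- use (γ₀)
        have e : b * (f.coeff i * x) =
            (f * g).coeff (n + i) * x - (f * g₁).coeff (n + i) * x := by
          rw [hγ i]; ring
        rw [e]
        apply sub_mem
        · exact Ideal.mul_mem_mul (coeff_mem_cont _ _) hx
        · rw [coeff_mul, Finset.sum_mul]
          refine Submodule.sum_mem _ ?_
          rintro ⟨u, v⟩ huv
          have huv' : u + v = n + i := Finset.HasAntidiagonal.mem_antidiagonal.1 huv
          by_cases hv : n ≤ v
          · rw [hG0 v hv]; simp
          · have hu : f.natDegree < u + d := by omega
            have e4 : f.coeff u * g₁.coeff v * x = f.coeff u * (g₁.coeff v * x) := by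
              ring
            rw [e4]
            exact helper u hu _ (IH'
              (Ideal.mul_mem_mul (coeff_mem_cont g₁ v) (hm ▸ hx)))
    -- part (ii) : for c ∈ cont f, x ∈ cont f ^ n, b * (c * x) ∈ K
    have part2 : ∀ c ∈ cont f, ∀ x ∈ cont f ^ n, b * (c * x) ∈ K := by
      intro c hc
      induction hc using Submodule.span_induction with
      | mem c hcm =>
        obtain ⟨i, rfl⟩ := hcm
        exact fun x hx => key (f.natDegree + 1) i (by omega) x hx
      | zero => intro x hx; simp
      | add c₁ c₂ _ _ h₁ h₂ =>
        intro x hx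
        have e : b * ((c₁ + c₂) * x) = b * (c₁ * x) + b * (c₂ * x) := by ring
        rw [e]; exact add_mem (h₁ x hx) (h₂ x hx)
      | smul t c _ h =>
        intro x hx
        rw [smul_eq_mul]
        have e : b * (t * c * x) = t * (b * (c * x)) := by ring
        rw [e]; exact Ideal.mul_mem_left _ _ (h x hx)
    -- span{b} * cont f ^ (n+1) ≤ K
    have hbpow : Ideal.span {b} * cont f ^ (n + 1) ≤ K := by
      refine Ideal.mul_le.2 ?_
      intro z hz y hy
      obtain ⟨t, rfl⟩ := Ideal.mem_span_singleton'.1 hz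
      rw [pow_succ] at hy
      refine Submodule.mul_induction_on hy (fun x hx c hc => ?_)
        (fun y₁ y₂ hy₁ hy₂ => by
          have e : t * b * (y₁ + y₂) = t * b * y₁ + t * b * y₂ := by ring
          rw [e]; exact add_mem hy₁ hy₂)
      have e : t * b * (x * c) = t * (b * (c * x)) := by ring
      rw [e]
      exact Ideal.mul_mem_left _ _ (part2 c hc x hx)
    -- cont g ≤ span{b} ⊔ cont g₁
    have hGle : cont g ≤ Ideal.span {b} ⊔ cont g₁ := by
      rw [cont, Ideal.span_le]
      rintro _ ⟨v, rfl⟩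
      by_cases hveq : v = g.natDegree
      · subst hveq
        exact Submodule.mem_sup_left (Ideal.subset_span rfl)
      · have : g.coeff v = g₁.coeff v := by
          rw [hg₁, eraseLead_coeff, if_neg hveq]
        rw [this]
        exact Submodule.mem_sup_right (coeff_mem_cont g₁ v)
    -- part (i) : cont f ^ (n+1) * cont g₁ ≤ K
    have part1 : cont f ^ (n + 1) * cont g₁ ≤ K := by
      calc cont f ^ (n + 1) * cont g₁
          = cont f * (cont g₁ * cont f ^ (m + 1)) := by
            rw [← hm, pow_succ]; ring
        _ ≤ cont f * (cont (f * g₁) * cont f ^ m) := Ideal.mul_mono_right IH'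
        _ ≤ (cont (f * g) ⊔ Ideal.span {b} * cont f) * (cont f * cont f ^ m) := by
            rw [show cont f * (cont (f*g₁) * cont f ^ m)
                = cont (f*g₁) * (cont f * cont f ^ m) by ring]
            exact Ideal.mul_mono_left hA1
        _ = cont (f * g) * cont f ^ n ⊔ Ideal.span {b} * cont f ^ (n + 1) := by
            rw [hm, ← Ideal.add_eq_sup, ← Ideal.add_eq_sup, add_mul]
            ring
        _ ≤ K := sup_le le_rfl hbpow
    -- assemble
    calc cont f ^ (n + 1) * cont g
        ≤ cont f ^ (n + 1) * (Ideal.span {b} ⊔ cont g₁) := Ideal.mul_mono_right hGle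
      _ = Ideal.span {b} * cont f ^ (n + 1) ⊔ cont f ^ (n + 1) * cont g₁ := by
          rw [Ideal.mul_sup, mul_comm (cont f ^ (n+1)) (Ideal.span {b})]
      _ ≤ K := sup_le hbpow part1

end DM

/-- The Dedekind--Mertens Lemma: if `n` is the degree of `g`, then
`c(fg)·c(f)^n = c(f)^{n+1}·c(g)`. -/
theorem dedekind_mertens {R : Type*} [CommRing R] (f g : R[X]) :
    cont (f * g) * cont f ^ g.natDegree = cont f ^ (g.natDegree + 1) * cont g := by
  refine le_antisymm ?_ (dm_hard f g.natDegree g le_rfl)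
  calc cont (f * g) * cont f ^ g.natDegree
      ≤ cont f * cont g * cont f ^ g.natDegree :=
        Ideal.mul_mono_left (cont_mul_le f g)
    _ = cont f ^ (g.natDegree + 1) * cont g := by rw [pow_succ]; ring
end

section
/- For polynomials f and g over a commutative ring R, the product c(f)·c(g) is contained in the integral closure of c(fg). In particular c(fg) and c(f)·c(g) have the same integral closure. -/
open Polynomial

/-!
By the Dedekind–Mertens lemma, `c(f)^(n+1) c(g) = c(f)^n c(fg)` with `n = deg g`, so `c(fg)` is a
reduction of `c(f) c(g)`: `(c(f) c(g))^(n+1) ⊆ c(fg) (c(f) c(g))^n`. The determinant trick shows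
that every element of a finitely generated ideal is integral over any reduction of it. For the
second claim, an element `x` integral over `J = c(f) c(g)` makes `J` a reduction of `J + (x)`, and
reductions compose.
-/

theorem Ideal.colon_mul_le {R : Type*} [CommRing R] (I J : Ideal R) :
    I.colon (J : Set R) * J ≤ I :=
  Ideal.mul_le.2 fun _ hr y hy => Submodule.mem_colon.1 hr y hy

namespace Polynomial

variable {R : Type*} [CommRing R]

theorem contentIdeal_le_iff {p : R[X]} {I : Ideal R} :
    p.contentIdeal ≤ I ↔ ∀ n, p.coeff n ∈ I := by
  refine ⟨fun h n => h (coeff_mem_contentIdeal p n), fun h => Ideal.span_le.2 fun c hc => ?_⟩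
  obtain ⟨n, -, rfl⟩ := mem_coeffs_iff.1 hc
  exact h n

theorem contentIdeal_mul_le_iff {p : R[X]} {I J : Ideal R} :
    p.contentIdeal * I ≤ J ↔ ∀ n, ∀ y ∈ I, p.coeff n * y ∈ J := by
  refine ⟨fun h n y hy => h (Ideal.mul_mem_mul (coeff_mem_contentIdeal p n) hy), fun h => ?_⟩
  have hle : p.contentIdeal ≤ J.colon (I : Set R) :=
    contentIdeal_le_iff.2 fun n => Submodule.mem_colon.2 (h n)
  exact Ideal.mul_le.2 fun r hr y hy => Submodule.mem_colon.1 (hle hr) y hy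

theorem contentIdeal_add_le (p q : R[X]) :
    (p + q).contentIdeal ≤ p.contentIdeal ⊔ q.contentIdeal :=
  contentIdeal_le_iff.2 fun n => by
    rw [coeff_add]
    exact Submodule.add_mem_sup (coeff_mem_contentIdeal p n) (coeff_mem_contentIdeal q n)

theorem contentIdeal_sub_le (p q : R[X]) :
    (p - q).contentIdeal ≤ p.contentIdeal ⊔ q.contentIdeal :=
  contentIdeal_le_iff.2 fun n => by
    rw [coeff_sub]
    exact sub_mem (Ideal.mem_sup_left (coeff_mem_contentIdeal p n))
      (Ideal.mem_sup_right (coeff_mem_contentIdeal q n))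

theorem contentIdeal_mul_span_singleton_le (p : R[X]) (b : R) :
    p.contentIdeal * Ideal.span {b} ≤ (p * C b).contentIdeal :=
  contentIdeal_mul_le_iff.2 fun n y hy => by
    obtain ⟨c, rfl⟩ := Ideal.mem_span_singleton'.1 hy
    rw [mul_left_comm, ← coeff_mul_C]
    exact Ideal.mul_mem_left _ c (coeff_mem_contentIdeal _ n)

theorem contentIdeal_le_contentIdeal_erase_sup (g : R[X]) (m : ℕ) :
    g.contentIdeal ≤ (g.erase m).contentIdeal ⊔ Ideal.span {g.coeff m} := by
  conv_lhs => rw [← monomial_add_erase g m]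
  rw [sup_comm, ← contentIdeal_monomial m (g.coeff m)]
  exact contentIdeal_add_le _ _

theorem contentIdeal_mul_erase_le (f g : R[X]) (m : ℕ) :
    (f * g.erase m).contentIdeal ≤
      (f * g).contentIdeal ⊔ Ideal.span {g.coeff m} * f.contentIdeal := by
  have h : f * g.erase m = f * g - f * monomial m (g.coeff m) := by
    rw [eq_sub_iff_add_eq, ← mul_add, add_comm, monomial_add_erase]
  rw [h, mul_comm (Ideal.span _), ← contentIdeal_monomial m (g.coeff m)]
  exact (contentIdeal_sub_le _ _).trans
    (sup_le_sup_left (contentIdeal_mul_le_mul_contentIdeal _ _) _)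

theorem natDegree_erase_le_of_natDegree_le_succ {g : R[X]} {n : ℕ} (hg : g.natDegree ≤ n + 1) :
    (g.erase (n + 1)).natDegree ≤ n := by
  rw [natDegree_le_iff_coeff_eq_zero]
  intro N hN
  rw [coeff_erase]
  split_ifs with h
  · rfl
  · exact coeff_eq_zero_of_natDegree_lt (by omega)

theorem coeff_mul_erase_mul_mem {f g : R[X]} {m s : ℕ} (hg : g.natDegree ≤ m) {G : Ideal R}
    {y : R} (hterm : ∀ i j, s < i → j < m → f.coeff i * (g.coeff j * y) ∈ G) :
    (f * g.erase m).coeff (s + m) * y ∈ G := by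
  rw [coeff_mul, Finset.sum_mul]
  refine Ideal.sum_mem _ fun ij hij => ?_
  obtain ⟨i, j⟩ := ij
  simp only [Finset.HasAntidiagonal.mem_antidiagonal] at hij ⊢
  rcases lt_or_ge j m with hj | hj
  · rw [erase_ne g hj.ne, mul_assoc]
    exact hterm i j (by omega) hj
  · rw [coeff_erase]
    split_ifs with h
    · simp
    · rw [coeff_eq_zero_of_natDegree_lt (p := g) (by omega), mul_zero, zero_mul]
      exact zero_mem G

theorem coeff_mul_coeff_mem_colon_of_forall_lt {f g : R[X]} {m s : ℕ} (hg : g.natDegree ≤ m)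
    {G K L : Ideal R} (hfg : (f * g).contentIdeal * L ≤ G) (hK : f.contentIdeal * K ≤ G)
    (hL : (g.erase m).contentIdeal * L ≤ K ⊔ Ideal.span {g.coeff m} * L)
    (ih : ∀ s' > s, g.coeff m * f.coeff s' ∈ G.colon (L : Set R)) :
    g.coeff m * f.coeff s ∈ G.colon (L : Set R) := by
  refine Submodule.mem_colon.2 fun y hy => ?_
  have hcoeff : g.coeff m * f.coeff s = (f * g).coeff (s + m) - (f * g.erase m).coeff (s + m) := by
    have hsplit := congrArg (fun p => (f * p).coeff (s + m)) (monomial_add_erase g m)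
    simp only [mul_add, coeff_add, coeff_mul_monomial] at hsplit
    rw [← hsplit]
    ring
  rw [smul_eq_mul, hcoeff, sub_mul]
  refine sub_mem (hfg (Ideal.mul_mem_mul (coeff_mem_contentIdeal _ _) hy))
    (coeff_mul_erase_mul_mem hg fun i j hi hj => ?_)
  have hspan : Ideal.span {f.coeff i} * (K ⊔ Ideal.span {g.coeff m} * L) ≤ G := by
    rw [Ideal.mul_sup, ← mul_assoc, Ideal.span_singleton_mul_span_singleton, mul_comm (f.coeff i)]
    refine sup_le (le_trans (Ideal.mul_mono_left ?_) hK)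
      (le_trans (Ideal.mul_mono_left ?_) (Ideal.colon_mul_le G L))
    · exact (Ideal.span_singleton_le_iff_mem _).2 (coeff_mem_contentIdeal f i)
    · exact (Ideal.span_singleton_le_iff_mem _).2 (ih i hi)
  have hgj : g.coeff j * y ∈ K ⊔ Ideal.span {g.coeff m} * L := by
    rw [← erase_ne g hj.ne]
    exact hL (Ideal.mul_mem_mul (coeff_mem_contentIdeal _ j) hy)
  exact hspan (Ideal.mul_mem_mul (Ideal.mem_span_singleton_self _) hgj)

/-- The inductive step of Dedekind–Mertens, with `L = c(f)^(n+1)`, `K = c(f)^n c(fg)` and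
`G = c(f) K`. -/
theorem span_coeff_mul_contentIdeal_mul_le {f g : R[X]} {m : ℕ} (hg : g.natDegree ≤ m)
    {G K L : Ideal R} (hfg : (f * g).contentIdeal * L ≤ G) (hK : f.contentIdeal * K ≤ G)
    (hL : (g.erase m).contentIdeal * L ≤ K ⊔ Ideal.span {g.coeff m} * L) :
    Ideal.span {g.coeff m} * f.contentIdeal * L ≤ G := by
  -- descending induction on `s`, starting above `deg f`
  have hcolon : ∀ k s, f.natDegree < s + k → g.coeff m * f.coeff s ∈ G.colon (L : Set R) := by
    intro k
    induction k with
    | zero =>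
      intro s hs
      rw [coeff_eq_zero_of_natDegree_lt (by omega : f.natDegree < s), mul_zero]
      exact zero_mem _
    | succ k ih =>
      exact fun s hs =>
        coeff_mul_coeff_mem_colon_of_forall_lt hg hfg hK hL fun s' hs' => ih s' (by omega)
  have hbf : Ideal.span {g.coeff m} * f.contentIdeal ≤ G.colon (L : Set R) := by
    rw [mul_comm]
    refine contentIdeal_mul_le_iff.2 fun s y hy => ?_
    obtain ⟨c, rfl⟩ := Ideal.mem_span_singleton'.1 hy
    rw [mul_left_comm, mul_comm (f.coeff s)]
    exact Ideal.mul_mem_left _ c (hcolon (f.natDegree + 1) s (by omega))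
  exact (Ideal.mul_mono_left hbf).trans (Ideal.colon_mul_le G L)

theorem contentIdeal_pow_succ_mul_le (f : R[X]) :
    ∀ (n : ℕ) (g : R[X]), g.natDegree ≤ n →
      f.contentIdeal ^ (n + 1) * g.contentIdeal ≤ f.contentIdeal ^ n * (f * g).contentIdeal
  | 0, g, hg => by
    rw [eq_C_of_natDegree_le_zero hg, contentIdeal_C, zero_add, pow_one, pow_zero, one_mul]
    exact contentIdeal_mul_span_singleton_le f _
  | n + 1, g, hg => by
    set F := f.contentIdeal
    have ih := contentIdeal_pow_succ_mul_le f n (g.erase (n + 1))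
      (natDegree_erase_le_of_natDegree_le_succ hg)
    have hfg : F ^ n * (f * g.erase (n + 1)).contentIdeal ≤
        F ^ n * (f * g).contentIdeal + Ideal.span {g.coeff (n + 1)} * F ^ (n + 1) := by
      refine (Ideal.mul_mono_right (contentIdeal_mul_erase_le f g (n + 1))).trans (le_of_eq ?_)
      rw [← Submodule.add_eq_sup]
      ring
    have hb : Ideal.span {g.coeff (n + 1)} * F ^ (n + 2) ≤ F ^ (n + 1) * (f * g).contentIdeal := by
      rw [pow_succ' F (n + 1), ← mul_assoc]
      refine span_coeff_mul_contentIdeal_mul_le (K := F ^ n * (f * g).contentIdeal) hg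
        (le_of_eq (mul_comm _ _)) (le_of_eq (by rw [← mul_assoc, ← pow_succ'])) ?_
      rw [mul_comm, ← Submodule.add_eq_sup]
      exact ih.trans hfg
    calc F ^ (n + 2) * g.contentIdeal
        ≤ F ^ (n + 2) * ((g.erase (n + 1)).contentIdeal + Ideal.span {g.coeff (n + 1)}) :=
          Ideal.mul_mono_right (contentIdeal_le_contentIdeal_erase_sup g (n + 1))
      _ = F * (F ^ (n + 1) * (g.erase (n + 1)).contentIdeal) +
            Ideal.span {g.coeff (n + 1)} * F ^ (n + 2) := by ring
      _ ≤ F * (F ^ n * (f * g).contentIdeal + Ideal.span {g.coeff (n + 1)} * F ^ (n + 1)) +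
            Ideal.span {g.coeff (n + 1)} * F ^ (n + 2) :=
          add_le_add_left (Ideal.mul_mono_right (ih.trans hfg)) _
      _ = F ^ (n + 1) * (f * g).contentIdeal + Ideal.span {g.coeff (n + 1)} * F ^ (n + 2) +
            Ideal.span {g.coeff (n + 1)} * F ^ (n + 2) := by ring
      _ ≤ F ^ (n + 1) * (f * g).contentIdeal := sup_le (sup_le le_rfl hb) hb

end Polynomial

namespace Ideal

variable {R : Type*} [CommRing R]

/-- `I` is a reduction of `J`: `I ≤ J` and `J ^ (n + 1) = I * J ^ n` for some `n` (given `I ≤ J`,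
the inclusion `≥` is automatic). -/
def IsReduction (I J : Ideal R) : Prop :=
  I ≤ J ∧ ∃ n : ℕ, J ^ (n + 1) ≤ I * J ^ n

theorem IsReduction.trans {I J L : Ideal R} (hIJ : I.IsReduction J) (hJL : J.IsReduction L) :
    I.IsReduction L := by
  obtain ⟨hIJ, n, hn⟩ := hIJ
  obtain ⟨hJL, k, hk⟩ := hJL
  have hpow : ∀ j, L ^ (k + j) ≤ J ^ j * L ^ k := by
    intro j
    induction j with
    | zero => simp
    | succ j ih =>
      calc L ^ (k + (j + 1)) = L ^ (k + 1) * L ^ j := by ring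
        _ ≤ J * L ^ k * L ^ j := mul_mono_left hk
        _ = J * L ^ (k + j) := by ring
        _ ≤ J * (J ^ j * L ^ k) := mul_mono_right ih
        _ = J ^ (j + 1) * L ^ k := by ring
  refine ⟨hIJ.trans hJL, k + n + 1, ?_⟩
  calc L ^ (k + n + 1 + 1) = L ^ (k + (n + 2)) := by ring
    _ ≤ J ^ (n + 2) * L ^ k := hpow (n + 2)
    _ = J ^ (n + 1) * (J * L ^ k) := by ring
    _ ≤ I * J ^ n * (J * L ^ k) := mul_mono_left hn
    _ = I * (J ^ (n + 1) * L ^ k) := by ring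
    _ ≤ I * (L ^ (n + 1) * L ^ k) := mul_mono_right (mul_mono_left (pow_right_mono hJL _))
    _ = I * L ^ (k + n + 1) := by ring

theorem sup_span_singleton_pow_succ_le (J : Ideal R) (x : R) (m : ℕ) :
    (J ⊔ span {x}) ^ (m + 1) ≤ J * (J ⊔ span {x}) ^ m ⊔ span {x ^ (m + 1)} := by
  induction m with
  | zero => simp
  | succ m ih =>
    set L := J ⊔ span {x}
    calc L ^ (m + 2) = J * L ^ (m + 1) + span {x} * L ^ (m + 1) := by
          rw [pow_succ', sup_mul, ← Submodule.add_eq_sup]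
      _ ≤ J * L ^ (m + 1) + span {x} * (J * L ^ m + span {x ^ (m + 1)}) :=
          add_le_add_right (mul_mono_right (by simpa only [Submodule.add_eq_sup] using ih)) _
      _ = J * L ^ (m + 1) + J * (span {x} * L ^ m) + span {x ^ (m + 2)} := by
          rw [pow_succ' x (m + 1), ← span_singleton_mul_span_singleton]
          ring
      _ ≤ J * L ^ (m + 1) + J * L ^ (m + 1) + span {x ^ (m + 2)} := by
          gcongr
          rw [pow_succ']
          exact mul_mono_left le_sup_right
      _ = J * L ^ (m + 1) ⊔ span {x ^ (m + 1 + 1)} := by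
          rw [← Submodule.add_eq_sup, add_idem]

theorem isReduction_sup_span_singleton {J : Ideal R} {x : R} (hx : memIntCl J x) :
    J.IsReduction (J ⊔ span {x}) := by
  obtain ⟨k, hk, a, ha, heq⟩ := hx
  obtain ⟨k, rfl⟩ : ∃ k', k = k' + 1 := ⟨k - 1, by omega⟩
  set L := J ⊔ span {x}
  have hxL : x ∈ L := mem_sup_right (mem_span_singleton_self x)
  have hxk : x ^ (k + 1) ∈ J * L ^ k := by
    rw [eq_neg_of_add_eq_zero_left heq]
    refine neg_mem (Ideal.sum_mem _ fun i hi => ?_)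
    obtain ⟨hi1, hik⟩ := Finset.mem_Icc.1 hi
    obtain ⟨j, rfl⟩ : ∃ j, i = j + 1 := ⟨i - 1, by omega⟩
    have hle : J ^ (j + 1) * L ^ (k + 1 - (j + 1)) ≤ J * L ^ k :=
      calc J ^ (j + 1) * L ^ (k + 1 - (j + 1)) ≤ J * L ^ j * L ^ (k - j) := by
            rw [pow_succ', Nat.add_sub_add_right]
            exact mul_mono_left (mul_mono_right (pow_right_mono le_sup_left j))
        _ = J * L ^ k := by rw [mul_assoc, ← pow_add, Nat.add_sub_cancel' (by omega)]
    exact hle (mul_mem_mul (ha (j + 1) hi1 hik) (pow_mem_pow hxL _))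
  refine ⟨le_sup_left, k, (sup_span_singleton_pow_succ_le J x k).trans (sup_le le_rfl ?_)⟩
  exact (span_singleton_le_iff_mem _).2 hxk

end Ideal

section

variable {R : Type*} [CommRing R]

theorem memIntCl_mono {I J : Ideal R} (h : I ≤ J) {x : R} (hx : memIntCl I x) : memIntCl J x :=
  let ⟨k, hk, a, ha, heq⟩ := hx
  ⟨k, hk, a, fun i h1 h2 => Ideal.pow_right_mono h i (ha i h1 h2), heq⟩

theorem memIntCl_of_monic {I : Ideal R} {x : R} {p : R[X]} (hp : p.Monic)
    (hcoeff : ∀ i, p.coeff i ∈ I ^ (p.natDegree - i)) (hx : p.eval x = 0) : memIntCl I x := by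
  cases subsingleton_or_nontrivial R
  · exact ⟨1, one_pos, 0, fun _ _ _ => zero_mem _, Subsingleton.elim _ _⟩
  have hdeg : 0 < p.natDegree := by
    refine Nat.pos_of_ne_zero fun h => one_ne_zero (α := R) ?_
    rwa [hp.natDegree_eq_zero.1 h, eval_one] at hx
  refine ⟨p.natDegree, hdeg, fun i => p.coeff (p.natDegree - i), fun i _ hi => ?_, ?_⟩
  · simpa [Nat.sub_sub_self hi] using hcoeff (p.natDegree - i)
  · rw [← hx, eval_eq_sum_range, Finset.sum_range_succ, hp.coeff_natDegree, one_mul, add_comm]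
    congr 1
    refine Finset.sum_nbij' (fun i => p.natDegree - i) (fun j => p.natDegree - j) ?_ ?_ ?_ ?_ ?_ <;>
      intro i hi <;> simp only [Finset.mem_Icc, Finset.mem_range] at hi ⊢ <;> omega

theorem memIntCl_of_pow_succ_le_mul_pow {I J : Ideal R} (hJ : J.FG) {n : ℕ}
    (hn : J ^ (n + 1) ≤ I * J ^ n) {x : R} (hx : x ∈ J) : memIntCl I x := by
  have : Module.Finite R ↥(J ^ n) := Module.Finite.iff_fg.2 (Ideal.FG.pow hJ)
  have hrange : LinearMap.range (algebraMap R (Module.End R ↥(J ^ n)) x) ≤ I • ⊤ := by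
    rintro _ ⟨m, rfl⟩
    rw [Submodule.mem_smul_top_iff, Ideal.smul_eq_mul]
    exact hn (by rw [pow_succ']; exact Ideal.mul_mem_mul hx m.2)
  obtain ⟨p, hp, -, hcoeff, heval⟩ :=
    LinearMap.exists_monic_and_natDegree_eq_and_coeff_mem_pow_and_aeval_eq_zero R _ I hrange
  have hpx : p.eval x * x ^ n = 0 := by
    have := congrArg Subtype.val (LinearMap.congr_fun heval ⟨x ^ n, Ideal.pow_mem_pow hx n⟩)
    rwa [aeval_algebraMap_apply, Module.algebraMap_end_apply] at this
  refine memIntCl_of_monic ((monic_X_pow n).mul hp) (fun i => ?_)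
    (by rw [eval_mul, eval_X_pow, mul_comm, hpx])
  rw [(monic_X_pow n).natDegree_mul hp, coeff_X_pow_mul']
  split_ifs with hi
  · have := natDegree_X_pow_le (R := R) n
    exact Ideal.pow_le_pow_right (by omega) (hcoeff (i - n))
  · exact zero_mem _

theorem cont_eq_contentIdeal (p : R[X]) : cont p = p.contentIdeal :=
  le_antisymm (Ideal.span_le.2 (Set.range_subset_iff.2 (coeff_mem_contentIdeal p)))
    (contentIdeal_le_iff.2 fun n => Ideal.subset_span ⟨n, rfl⟩)

theorem isReduction_contentIdeal_mul (f g : R[X]) :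
    (f * g).contentIdeal.IsReduction (f.contentIdeal * g.contentIdeal) := by
  refine ⟨contentIdeal_mul_le_mul_contentIdeal f g, g.natDegree, ?_⟩
  calc (f.contentIdeal * g.contentIdeal) ^ (g.natDegree + 1)
      = f.contentIdeal ^ (g.natDegree + 1) * g.contentIdeal * g.contentIdeal ^ g.natDegree := by
        ring
    _ ≤ f.contentIdeal ^ g.natDegree * (f * g).contentIdeal * g.contentIdeal ^ g.natDegree :=
        Ideal.mul_mono_left (contentIdeal_pow_succ_mul_le f _ g le_rfl)
    _ = (f * g).contentIdeal * (f.contentIdeal * g.contentIdeal) ^ g.natDegree := by ring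

end

/-- For polynomials `f`, `g` over a commutative ring, `c(f)·c(g)` is contained in the
integral closure of `c(fg)`; in particular `c(fg)` and `c(f)·c(g)` have the same
integral closure. -/
theorem content_mul_subset_integralClosure {R : Type*} [CommRing R] (f g : R[X]) :
    (∀ x ∈ cont f * cont g, memIntCl (cont (f * g)) x) ∧
    (∀ x : R, memIntCl (cont (f * g)) x ↔ memIntCl (cont f * cont g) x) := by
  simp only [cont_eq_contentIdeal]
  have hred := isReduction_contentIdeal_mul f g
  have hfg : (f.contentIdeal * g.contentIdeal).FG := (contentIdeal_FG f).mul (contentIdeal_FG g)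
  obtain ⟨n, hn⟩ := hred.2
  refine ⟨fun x hx => memIntCl_of_pow_succ_le_mul_pow hfg hn hx,
    fun x => ⟨memIntCl_mono hred.1, fun hx => ?_⟩⟩
  obtain ⟨-, m, hm⟩ := hred.trans (Ideal.isReduction_sup_span_singleton hx)
  exact memIntCl_of_pow_succ_le_mul_pow (Submodule.FG.sup hfg (Submodule.fg_span_singleton x)) hm
    (Ideal.mem_sup_right (Ideal.mem_span_singleton_self x))
end

section
/- Let F be a field, R = F[[s^3, s^4]] ⊆ F[[s]], and I a nonzero ideal of R with I·F[[s]] = s^n·F[[s]]. Then the minimal number of generators μ_R(I) is at most 3, and μ_R(I) = 3 if and only if I contains power series (in s) of orders n, n+1, and n+2; in that case I = s^n·F[[s]], I is integrally closed, and n ≥ 6. -/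
/-!
Fix `x ∈ I` of order `n`. Since `R` contains every series of order `≥ 6`, every series of order
`≥ n + 6` is an `R`-multiple of `x`; so an ideal `J ≤ I` containing `x` already equals `I` once
it attains each order `n + j`, `j < 6`, attained in `I` (subtract multiples to raise the order).
Multiplication by `X³, X⁴ ∈ R` turns the orders `n, n + 1, n + 2` into `n + 3, n + 4, n + 5`. Hence
if `I` has elements `y, z` of orders `n + 1, n + 2` then `I = (x, y, z)` and `I` contains every
series of order `≥ n`; otherwise one well-chosen `y` gives `I = (x, y)`. In the first case the
coefficients in degrees `n, n + 1, n + 2` map `I` onto `F³`, and `R` acts there through the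
constant term (its elements have no terms in degrees `1`, `2`), so `I` needs three generators.
-/

open Polynomial

theorem mug_le_of_span_eq {A : Type*} [CommRing A] {I : Ideal A} {k : ℕ} (v : Fin k → A)
    (hv : Ideal.span (Set.range v) = I) : mug I ≤ k :=
  Nat.sInf_le ⟨v, hv⟩

theorem mug_eq_of_span_eq {A : Type*} [CommRing A] {I : Ideal A} {k : ℕ} (v : Fin k → A)
    (hv : Ideal.span (Set.range v) = I)
    (hmin : ∀ m (w : Fin m → A), Ideal.span (Set.range w) = I → k ≤ m) : mug I = k :=
  le_antisymm (mug_le_of_span_eq v hv) (le_csInf ⟨k, v, hv⟩ fun m ⟨w, hw⟩ => hmin m w hw)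

namespace PowerSeries

variable {K : Type*} [Field K]

theorem mem_span_X_pow_iff {A : Type*} [CommRing A] {f : A⟦X⟧} {m : ℕ} :
    f ∈ Ideal.span {(X : A⟦X⟧) ^ m} ↔ (m : ℕ∞) ≤ f.order := by
  rw [Ideal.mem_span_singleton, X_pow_dvd_iff]
  exact ⟨nat_le_order f m, fun h i hi => coeff_of_lt_order i ((Nat.cast_lt.2 hi).trans_le h)⟩

theorem dvd_of_order_le {f g : K⟦X⟧} (h : f.order ≤ g.order) : f ∣ g := by
  rcases eq_or_ne f 0 with rfl | hf
  · rw [order_zero, top_le_iff, order_eq_top] at h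
    simp [h]
  rw [← X_pow_order_mul_divXPowOrder (f := f), (isUnit_divided_by_X_pow_order hf).mul_right_dvd,
    ← Ideal.mem_span_singleton, mem_span_X_pow_iff, coe_toNat_order hf]
  exact h

theorem add_one_le_order_sub_C_mul {f g : K⟦X⟧} {k : ℕ} (hf : (k : ℕ∞) ≤ f.order)
    (hg : g.order = k) : ((k + 1 : ℕ) : ℕ∞) ≤ (f - C (coeff k f / coeff k g) * g).order := by
  obtain ⟨hgk, hg_lt⟩ := order_eq_nat.1 hg
  refine nat_le_order _ _ fun i hi => ?_
  rw [map_sub, coeff_C_mul]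
  rcases (Nat.lt_succ_iff.1 hi).lt_or_eq with hik | rfl
  · rw [coeff_of_lt_order i ((Nat.cast_lt.2 hik).trans_le hf), hg_lt i hik, mul_zero, sub_zero]
  · rw [div_mul_cancel₀ _ hgk, sub_self]

def HasOrder {A : Type*} [CommRing A] {R : Subring A⟦X⟧} (J : Ideal R) (k : ℕ) : Prop :=
  ∃ w ∈ J, (w : A⟦X⟧).order = k

section Subring

variable {R : Subring K⟦X⟧}

theorem HasOrder.X_pow_mul {J : Ideal R} {k j : ℕ} (h : HasOrder J k) (hj : X ^ j ∈ R) :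
    HasOrder J (k + j) := by
  obtain ⟨w, hw, hwk⟩ := h
  refine ⟨⟨X ^ j, hj⟩ * w, J.mul_mem_left _ hw, ?_⟩
  rw [Subring.coe_mul, order_mul, order_X_pow, hwk, add_comm, Nat.cast_add]

theorem le_order_of_map_eq_span {I : Ideal R} {n : ℕ}
    (hmap : I.map R.subtype = Ideal.span {X ^ n}) {w : R} (hw : w ∈ I) :
    (n : ℕ∞) ≤ (w : K⟦X⟧).order :=
  mem_span_X_pow_iff.1 (hmap ▸ Ideal.mem_map_of_mem R.subtype hw)

theorem hasOrder_of_map_eq_span {I : Ideal R} {n : ℕ}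
    (hmap : I.map R.subtype = Ideal.span {X ^ n}) : HasOrder I n := by
  by_contra h
  have hle : I.map R.subtype ≤ Ideal.span {X ^ (n + 1)} := by
    refine Ideal.map_le_iff_le_comap.2 fun w hw => ?_
    rw [Ideal.mem_comap, mem_span_X_pow_iff, Nat.cast_succ]
    exact Order.add_one_le_of_lt
      ((le_order_of_map_eq_span hmap hw).lt_of_ne fun he => h ⟨w, hw, he.symm⟩)
  have hXn := hle (hmap ▸ Ideal.mem_span_singleton_self _)
  rw [mem_span_X_pow_iff, order_X_pow, Nat.cast_le] at hXn
  omega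

theorem eq_of_le_of_hasOrder {c n : ℕ} (hC : ∀ a : K, C a ∈ R)
    (hc : ∀ f : K⟦X⟧, (c : ℕ∞) ≤ f.order → f ∈ R) {I J : Ideal R} (hJI : J ≤ I)
    (hI : ∀ w ∈ I, (n : ℕ∞) ≤ (w : K⟦X⟧).order) (hn : HasOrder J n)
    (hord : ∀ j < c, HasOrder I (n + j) → HasOrder J (n + j)) : J = I := by
  obtain ⟨x, hxJ, hx⟩ := hn
  have above : ∀ w ∈ I, ((n + c : ℕ) : ℕ∞) ≤ (w : K⟦X⟧).order → w ∈ J := by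
    intro w _ hw
    obtain ⟨q, hq⟩ := dvd_of_order_le (hx.trans_le (le_trans (by simp) hw))
    rw [hq, order_mul, hx, Nat.cast_add, ENat.add_le_add_iff_left (ENat.natCast_ne_top n)] at hw
    have hw' : w = ⟨q, hc q hw⟩ * x := Subtype.ext (by rw [hq, mul_comm]; rfl)
    exact hw' ▸ J.mul_mem_left _ hxJ
  have step : ∀ j < c, (∀ w ∈ I, ((n + (j + 1) : ℕ) : ℕ∞) ≤ (w : K⟦X⟧).order → w ∈ J) →
      ∀ w ∈ I, ((n + j : ℕ) : ℕ∞) ≤ (w : K⟦X⟧).order → w ∈ J := by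
    intro j hj ih w hwI hw
    rcases hw.lt_or_eq with hlt | heq
    · exact ih w hwI (by simpa [← add_assoc] using Order.add_one_le_of_lt hlt)
    obtain ⟨v, hvJ, hv⟩ := hord j hj ⟨w, hwI, heq.symm⟩
    set a := coeff (n + j) (w : K⟦X⟧) / coeff (n + j) (v : K⟦X⟧)
    have hrest : w - ⟨C a, hC a⟩ * v ∈ J :=
      ih _ (I.sub_mem hwI (I.mul_mem_left _ (hJI hvJ))) (add_one_le_order_sub_C_mul hw hv)
    have hsum := J.add_mem hrest (J.mul_mem_left ⟨C a, hC a⟩ hvJ)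
    rwa [sub_add_cancel] at hsum
  refine le_antisymm hJI fun w hw => ?_
  exact Nat.decreasingInduction (motive := fun j _ => ∀ w ∈ I, ((n + j : ℕ) : ℕ∞) ≤
    (w : K⟦X⟧).order → w ∈ J) (fun j hj => step j hj) above (Nat.zero_le c) w hw (hI w hw)

theorem le_card_of_span_eq {k n m : ℕ} (hR : ∀ r ∈ R, ∀ i, 0 < i → i < k → coeff i r = 0)
    {I : Ideal R} (hI : ∀ w ∈ I, (n : ℕ∞) ≤ (w : K⟦X⟧).order)
    (hX : ∀ j < k, ∃ w ∈ I, (w : K⟦X⟧) = X ^ (n + j))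
    {v : Fin m → R} (hv : Ideal.span (Set.range v) = I) : k ≤ m := by
  let c : K⟦X⟧ →ₗ[K] Fin k → K := LinearMap.pi fun j => coeff (n + j)
  -- on series of order `≥ n`, multiplication by `r ∈ R` acts on `c` through `r(0)`
  have hmul : ∀ r : R, ∀ f : K⟦X⟧, (n : ℕ∞) ≤ f.order → c (r * f) = coeff 0 (r : K⟦X⟧) • c f := by
    intro r f hf
    funext j
    simp only [c, LinearMap.pi_apply, Pi.smul_apply, smul_eq_mul, coeff_mul]
    refine Finset.sum_eq_single (0, n + j) (fun ⟨a, b⟩ hab hne => ?_) (by simp)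
    rw [Finset.HasAntidiagonal.mem_antidiagonal] at hab
    by_cases ha : a < k
    · rw [hR r r.2 a (Nat.pos_of_ne_zero fun h => hne (by simp_all)) ha, zero_mul]
    · rw [coeff_of_lt_order b (lt_of_lt_of_le (Nat.cast_lt.2 (by omega)) hf), mul_zero]
  set V := Submodule.span K (Set.range fun i => c (v i))
  have hmem : ∀ w ∈ I, c w ∈ V := by
    intro w hw
    rw [← hv] at hw
    induction hw using Submodule.span_induction with
    | mem w h => obtain ⟨i, rfl⟩ := h; exact Submodule.subset_span ⟨i, rfl⟩
    | zero => simp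
    | add w w' _ _ h h' => simpa using V.add_mem h h'
    | smul r w hw h =>
      rw [smul_eq_mul, Subring.coe_mul, hmul r w (hI w (hv ▸ hw))]
      exact V.smul_mem _ h
  have htop : V = ⊤ := by
    rw [eq_top_iff, ← (Pi.basisFun K (Fin k)).span_eq, Submodule.span_le]
    rintro _ ⟨j, rfl⟩
    obtain ⟨w, hwI, hw⟩ := hX j j.2
    rw [SetLike.mem_coe]
    convert hmem w hwI using 1
    funext i
    simp [c, hw, coeff_X_pow, Pi.single_apply, eq_comm, Fin.val_inj]
  have hrank : Module.finrank K V ≤ m := by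
    simpa [Set.finrank] using finrank_range_le_card (R := K) fun i => c (v i)
  rwa [htop, finrank_top, Module.finrank_fin_fun] at hrank

end Subring

/-- The subring `K⟦X³, X⁴⟧`: the series without terms in degrees `1`, `2`, `5`. -/
def IsSemigroupRingS34 (R : Subring K⟦X⟧) : Prop :=
  ∀ f : K⟦X⟧, f ∈ R ↔ coeff 1 f = 0 ∧ coeff 2 f = 0 ∧ coeff 5 f = 0

namespace IsSemigroupRingS34

variable {R : Subring K⟦X⟧}

theorem C_mem (hR : IsSemigroupRingS34 R) (a : K) : C a ∈ R :=
  (hR _).2 (by simp)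

theorem X_pow_three_mem (hR : IsSemigroupRingS34 R) : X ^ 3 ∈ R :=
  (hR _).2 (by simp [coeff_X_pow])

theorem X_pow_four_mem (hR : IsSemigroupRingS34 R) : X ^ 4 ∈ R :=
  (hR _).2 (by simp [coeff_X_pow])

theorem mem_of_six_le_order (hR : IsSemigroupRingS34 R) {f : K⟦X⟧} (hf : (6 : ℕ∞) ≤ f.order) :
    f ∈ R :=
  (hR f).2 ⟨coeff_of_lt_order 1 (lt_of_lt_of_le (by norm_num) hf),
    coeff_of_lt_order 2 (lt_of_lt_of_le (by norm_num) hf),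
    coeff_of_lt_order 5 (lt_of_lt_of_le (by norm_num) hf)⟩

theorem coeff_eq_zero_of_lt_three (hR : IsSemigroupRingS34 R) {r : K⟦X⟧} (hr : r ∈ R) {i : ℕ}
    (h0 : 0 < i) (h3 : i < 3) : coeff i r = 0 := by
  obtain ⟨h1, h2, -⟩ := (hR r).1 hr
  interval_cases i <;> assumption

theorem ne_of_hasOrder (hR : IsSemigroupRingS34 R) {J : Ideal R} {k : ℕ} (h : HasOrder J k) :
    k ≠ 1 ∧ k ≠ 2 ∧ k ≠ 5 := by
  obtain ⟨w, -, hw⟩ := h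
  have hk := (order_eq_nat.1 hw).1
  obtain ⟨h1, h2, h5⟩ := (hR w).1 w.2
  exact ⟨by rintro rfl; exact hk h1, by rintro rfl; exact hk h2, by rintro rfl; exact hk h5⟩

theorem forall_hasOrder_of_three (hR : IsSemigroupRingS34 R) {J : Ideal R} {n : ℕ}
    (h0 : HasOrder J n) (h1 : HasOrder J (n + 1)) (h2 : HasOrder J (n + 2)) :
    ∀ j < 6, HasOrder J (n + j) := by
  intro j hj
  interval_cases j
  exacts [h0, h1, h2, h0.X_pow_mul hR.X_pow_three_mem, h0.X_pow_mul hR.X_pow_four_mem,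
    h2.X_pow_mul hR.X_pow_three_mem]

theorem exists_span_pair_hasOrder (hR : IsSemigroupRingS34 R) {I : Ideal R} {x : R} {n : ℕ}
    (hxI : x ∈ I) (hx : (x : K⟦X⟧).order = n) (hP : ¬(HasOrder I (n + 1) ∧ HasOrder I (n + 2))) :
    ∃ y ∈ I, ∀ j < 6, HasOrder I (n + j) → HasOrder (Ideal.span {x, y}) (n + j) := by
  -- `y` has the least of the orders `n + 1`, `n + 2`, `n + 5` that occur in `I`
  obtain ⟨y, hyI, hy⟩ : ∃ y ∈ I, ∀ j, (j = 1 ∨ j = 2 ∨ j = 5) → HasOrder I (n + j) →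
      HasOrder (Ideal.span {x, y}) (n + j) := by
    by_cases h1 : HasOrder I (n + 1)
    · obtain ⟨y, hyI, hy⟩ := h1
      have hJ : HasOrder (Ideal.span {x, y}) (n + 1) := ⟨y, Ideal.subset_span (by simp), hy⟩
      refine ⟨y, hyI, ?_⟩
      rintro j (rfl | rfl | rfl) hj
      exacts [hJ, absurd ⟨⟨y, hyI, hy⟩, hj⟩ hP, hJ.X_pow_mul hR.X_pow_four_mem]
    by_cases h2 : HasOrder I (n + 2)
    · obtain ⟨y, hyI, hy⟩ := h2
      have hJ : HasOrder (Ideal.span {x, y}) (n + 2) := ⟨y, Ideal.subset_span (by simp), hy⟩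
      refine ⟨y, hyI, ?_⟩
      rintro j (rfl | rfl | rfl) hj
      exacts [absurd hj h1, hJ, hJ.X_pow_mul hR.X_pow_three_mem]
    by_cases h5 : HasOrder I (n + 5)
    · obtain ⟨y, hyI, hy⟩ := h5
      refine ⟨y, hyI, ?_⟩
      rintro j (rfl | rfl | rfl) hj
      exacts [absurd hj h1, absurd hj h2, ⟨y, Ideal.subset_span (by simp), hy⟩]
    refine ⟨x, hxI, ?_⟩
    rintro j (rfl | rfl | rfl) hj
    exacts [absurd hj h1, absurd hj h2, absurd hj h5]
  have h0 : HasOrder (Ideal.span {x, y}) n := ⟨x, Ideal.subset_span (by simp), hx⟩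
  refine ⟨y, hyI, fun j hj hIj => ?_⟩
  interval_cases j
  exacts [h0, hy 1 (by simp) hIj, hy 2 (by simp) hIj, h0.X_pow_mul hR.X_pow_three_mem,
    h0.X_pow_mul hR.X_pow_four_mem, hy 5 (by simp) hIj]

theorem eq_of_le_of_hasOrder (hR : IsSemigroupRingS34 R) {I J : Ideal R} {n : ℕ} (hJI : J ≤ I)
    (hI : ∀ w ∈ I, (n : ℕ∞) ≤ (w : K⟦X⟧).order) (hn : HasOrder J n)
    (hord : ∀ j < 6, HasOrder I (n + j) → HasOrder J (n + j)) : J = I :=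
  _root_.PowerSeries.eq_of_le_of_hasOrder hR.C_mem (fun _ => hR.mem_of_six_le_order) hJI hI hn hord

theorem six_le_of_hasOrder (hR : IsSemigroupRingS34 R) {J : Ideal R} {n : ℕ} (h0 : HasOrder J n)
    (h1 : HasOrder J (n + 1)) (h2 : HasOrder J (n + 2)) : 6 ≤ n := by
  have := hR.ne_of_hasOrder h0
  have := hR.ne_of_hasOrder h1
  have := hR.ne_of_hasOrder h2
  omega

variable {I : Ideal R} {n : ℕ}

theorem eq_comap_of_hasOrder (hR : IsSemigroupRingS34 R)
    (hmap : I.map R.subtype = Ideal.span {X ^ n}) (h1 : HasOrder I (n + 1))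
    (h2 : HasOrder I (n + 2)) : I = Ideal.comap R.subtype (Ideal.span {X ^ n}) := by
  have hI := hR.forall_hasOrder_of_three (hasOrder_of_map_eq_span hmap) h1 h2
  exact hR.eq_of_le_of_hasOrder (hmap ▸ Ideal.le_comap_map)
    (fun w hw => mem_span_X_pow_iff.1 hw) (hI 0 (by norm_num)) fun j hj _ => hI j hj

theorem exists_coe_eq_of_mem_span (hR : IsSemigroupRingS34 R)
    (hmap : I.map R.subtype = Ideal.span {X ^ n}) (h1 : HasOrder I (n + 1))
    (h2 : HasOrder I (n + 2)) {f : K⟦X⟧} (hf : f ∈ Ideal.span {X ^ n}) :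
    ∃ w ∈ I, (w : K⟦X⟧) = f := by
  have h6 := hR.six_le_of_hasOrder (hasOrder_of_map_eq_span hmap) h1 h2
  refine ⟨⟨f, hR.mem_of_six_le_order ((Nat.cast_le.2 h6).trans (mem_span_X_pow_iff.1 hf))⟩, ?_, rfl⟩
  rw [hR.eq_comap_of_hasOrder hmap h1 h2]
  exact hf

theorem mug_eq_three (hR : IsSemigroupRingS34 R) (hmap : I.map R.subtype = Ideal.span {X ^ n})
    (h1 : HasOrder I (n + 1)) (h2 : HasOrder I (n + 2)) : mug I = 3 := by
  obtain ⟨x, hxI, hx⟩ := hasOrder_of_map_eq_span hmap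
  obtain ⟨y, hyI, hy⟩ := h1
  obtain ⟨z, hzI, hz⟩ := h2
  have hJ := hR.forall_hasOrder_of_three (J := Ideal.span {x, y, z})
    ⟨x, Ideal.subset_span (by simp), hx⟩ ⟨y, Ideal.subset_span (by simp), hy⟩
    ⟨z, Ideal.subset_span (by simp), hz⟩
  have hJI : Ideal.span {x, y, z} = I :=
    hR.eq_of_le_of_hasOrder (Ideal.span_le.2 (by simp [Set.insert_subset_iff, hxI, hyI, hzI]))
      (fun w => le_order_of_map_eq_span hmap) (hJ 0 (by norm_num)) fun j hj _ => hJ j hj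
  refine mug_eq_of_span_eq ![x, y, z]
    (by rw [Matrix.range_cons, Matrix.range_cons_cons_empty, Set.singleton_union, hJI])
    fun m v hv => le_card_of_span_eq (fun r hr _ => hR.coeff_eq_zero_of_lt_three hr)
      (fun w => le_order_of_map_eq_span hmap) (fun j _ => ?_) hv
  exact hR.exists_coe_eq_of_mem_span hmap ⟨y, hyI, hy⟩ ⟨z, hzI, hz⟩
    (mem_span_X_pow_iff.2 (by simp [order_X_pow]))

theorem mug_le_two (hR : IsSemigroupRingS34 R) (hmap : I.map R.subtype = Ideal.span {X ^ n})
    (hP : ¬(HasOrder I (n + 1) ∧ HasOrder I (n + 2))) : mug I ≤ 2 := by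
  obtain ⟨x, hxI, hx⟩ := hasOrder_of_map_eq_span hmap
  obtain ⟨y, hyI, hy⟩ := hR.exists_span_pair_hasOrder hxI hx hP
  have hJI : Ideal.span {x, y} = I :=
    hR.eq_of_le_of_hasOrder (Ideal.span_le.2 (by simp [Set.insert_subset_iff, hxI, hyI]))
      (fun w => le_order_of_map_eq_span hmap) (hy 0 (by norm_num) ⟨x, hxI, hx⟩) hy
  exact mug_le_of_span_eq ![x, y] (by rw [Matrix.range_cons_cons_empty, hJI])

end IsSemigroupRingS34

end PowerSeries

theorem mug_ideal_s3s4_general {F : Type*} [Field F] (R : Subring (PowerSeries F))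
    (hR : ∀ f : PowerSeries F, f ∈ R ↔
      PowerSeries.coeff (R := F) 1 f = 0 ∧ PowerSeries.coeff (R := F) 2 f = 0 ∧ PowerSeries.coeff (R := F) 5 f = 0)
    (I : Ideal ↥R) (n : ℕ)
    (hmap : Ideal.map R.subtype I = Ideal.span {(PowerSeries.X : PowerSeries F) ^ n}) :
    mug I ≤ 3 ∧
    (mug I = 3 ↔
      ((∃ x ∈ I, (x : PowerSeries F).order = (n : ℕ∞)) ∧
       (∃ x ∈ I, (x : PowerSeries F).order = ((n + 1 : ℕ) : ℕ∞)) ∧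
       (∃ x ∈ I, (x : PowerSeries F).order = ((n + 2 : ℕ) : ℕ∞)))) ∧
    (mug I = 3 →
      ((∀ f ∈ Ideal.span {(PowerSeries.X : PowerSeries F) ^ n}, ∃ x ∈ I, (x : PowerSeries F) = f) ∧
       I = Ideal.comap R.subtype (Ideal.map R.subtype I) ∧
       6 ≤ n)) := by
  have hR' : PowerSeries.IsSemigroupRingS34 R := hR
  by_cases hP : PowerSeries.HasOrder I (n + 1) ∧ PowerSeries.HasOrder I (n + 2)
  · have hmug := hR'.mug_eq_three hmap hP.1 hP.2
    have hn := PowerSeries.hasOrder_of_map_eq_span hmap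
    refine ⟨hmug.le, iff_of_true hmug ⟨hn, hP⟩, fun _ => ⟨fun f hf => ?_, ?_, ?_⟩⟩
    · exact hR'.exists_coe_eq_of_mem_span hmap hP.1 hP.2 hf
    · rw [hmap]
      exact hR'.eq_comap_of_hasOrder hmap hP.1 hP.2
    · exact hR'.six_le_of_hasOrder hn hP.1 hP.2
  · have hmug := hR'.mug_le_two hmap hP
    exact ⟨by omega, iff_of_false (by omega) fun ⟨_, h1, h2⟩ => hP ⟨h1, h2⟩,
      fun h => absurd h (by omega)⟩

/-- Facts (1)--(2) about `R = F[[s³,s⁴]] ⊆ F[[s]]` (the subring of power series whose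
coefficients in degrees `1, 2, 5` vanish): for a nonzero ideal `I` of `R` with
`I·F[[s]] = sⁿ·F[[s]]`, we have `μ_R(I) ≤ 3`, and `μ_R(I) = 3` iff `I` contains power
series of orders `n`, `n+1` and `n+2`; in that case every power series of
`sⁿ·F[[s]]` lies in `I` (so `I = sⁿ·F[[s]]`), `I` is integrally closed
(`I = I·F[[s]] ∩ R`), and `n ≥ 6`. -/
theorem mug_ideal_s3s4 {F : Type*} [Field F] (R : Subring (PowerSeries F))
    (hR : ∀ f : PowerSeries F, f ∈ R ↔
      PowerSeries.coeff (R := F) 1 f = 0 ∧ PowerSeries.coeff (R := F) 2 f = 0 ∧ PowerSeries.coeff (R := F) 5 f = 0)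
    (I : Ideal ↥R) (hI : I ≠ ⊥) (n : ℕ)
    (hmap : Ideal.map R.subtype I = Ideal.span {(PowerSeries.X : PowerSeries F) ^ n}) :
    mug I ≤ 3 ∧
    (mug I = 3 ↔
      ((∃ x ∈ I, (x : PowerSeries F).order = (n : ℕ∞)) ∧
       (∃ x ∈ I, (x : PowerSeries F).order = ((n + 1 : ℕ) : ℕ∞)) ∧
       (∃ x ∈ I, (x : PowerSeries F).order = ((n + 2 : ℕ) : ℕ∞)))) ∧
    (mug I = 3 →
      ((∀ f ∈ Ideal.span {(PowerSeries.X : PowerSeries F) ^ n}, ∃ x ∈ I, (x : PowerSeries F) = f) ∧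
       I = Ideal.comap R.subtype (Ideal.map R.subtype I) ∧
       6 ≤ n)) :=
  mug_ideal_s3s4_general R hR I n hmap
end

section
/- Let R ⊆ R̄ be a one-dimensional Noetherian local domain with R̄ = integral closure of R a DVR that is a finitely generated R-module, with the same residue field, uniformizer s, multiplicity e (so mR̄ = s^e R̄). For nonzero ideals I, J of R with IR̄ = s^n R̄, define γ(I) = {i : 1 ≤ i < e and ∃ a ∈ I with aR̄ = s^{n+i}R̄}. Then γ(IJ) contains γ(I), γ(J), and all sums i + j ≤ e − 1 with i ∈ γ(I), j ∈ γ(J). In particular, if |γ(I)| = e−1 then |γ(IJ)| = e−1 and IJ is integrally closed. -/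
open Polynomial

/-- With `I·R̄ = s^n R̄`, the set `γ(I) = {i | 1 ≤ i < e, ∃ a ∈ I, aR̄ = s^{n+i}R̄}`. -/
def gammaSet {R Rbar : Type*} [CommRing R] [CommRing Rbar] [Algebra R Rbar]
    (e : ℕ) (s : Rbar) (n : ℕ) (I : Ideal R) : Set ℕ :=
  {i | 1 ≤ i ∧ i < e ∧ ∃ a ∈ I, Ideal.span {algebraMap R Rbar a} = Ideal.span {s ^ (n + i)}}

/-!
Orders of elements are additive in `R̄`, which gives the inclusions for `γ(IJ)`. When `γ(IJ)` is
full, multiplying by powers of an element of `m` of order `e` produces elements of `IJ` of every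
order `≥ n + m`. As `R` and `R̄` share their residue field, an `x ∈ IJR̄ ∩ R` is then congruent to
an element of `IJ` modulo any power of `s`. By Artin–Rees, `R ∩ s^{e(v+c)}R̄ ⊆ m^v`, so
`x ∈ ⋂ᵥ (IJ + m^v) = IJ` by Krull's intersection theorem.
-/

open IsLocalRing

section Associated

variable {R A : Type*} [CommRing R] [CommRing A] [Algebra R A] {s : A}

lemma exists_mem_associated_pow_add {K : Ideal R} {N e : ℕ} (he : 0 < e) {z : R}
    (hz : Associated (algebraMap R A z) (s ^ e))
    (hK : ∀ i < e, ∃ a ∈ K, Associated (algebraMap R A a) (s ^ (N + i))) (t : ℕ) :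
    ∃ b ∈ K, Associated (algebraMap R A b) (s ^ (N + t)) := by
  obtain ⟨a, haK, ha⟩ := hK (t % e) (Nat.mod_lt t he)
  refine ⟨a * z ^ (t / e), K.mul_mem_right _ haK, ?_⟩
  have ht : N + t = N + t % e + e * (t / e) := by
    have := Nat.mod_add_div t e
    omega
  rw [map_mul, map_pow, ht, pow_add, pow_mul]
  exact ha.mul_mul (hz.pow_pow)

lemma exists_dvd_sub_mul_pow_succ (hres : ∀ y : A, ∃ x : R, s ∣ y - algebraMap R A x)
    {b y : R} {p : ℕ} (hb : Associated (algebraMap R A b) (s ^ p))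
    (hy : s ^ p ∣ algebraMap R A y) :
    ∃ c : R, s ^ (p + 1) ∣ algebraMap R A (y - b * c) := by
  obtain ⟨q, hq⟩ := hb.symm.dvd_iff_dvd_left.mp hy
  obtain ⟨c, d, hd⟩ := hres q
  refine ⟨c, ?_⟩
  have : algebraMap R A (y - b * c) = algebraMap R A b * s * d := by
    rw [map_sub, map_mul, hq, mul_assoc, ← hd, mul_sub]
  rw [this, pow_succ]
  exact (mul_dvd_mul_right hb.symm.dvd s).mul_right d

lemma exists_mem_dvd_sub_pow_add (hres : ∀ y : A, ∃ x : R, s ∣ y - algebraMap R A x)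
    {K : Ideal R} {N : ℕ} (hK : ∀ t, ∃ b ∈ K, Associated (algebraMap R A b) (s ^ (N + t)))
    {x : R} (hx : s ^ N ∣ algebraMap R A x) (t : ℕ) :
    ∃ k ∈ K, s ^ (N + t) ∣ algebraMap R A (x - k) := by
  induction t with
  | zero => exact ⟨0, K.zero_mem, by simpa using hx⟩
  | succ t ih =>
    obtain ⟨k, hk, hxk⟩ := ih
    obtain ⟨b, hb, hbt⟩ := hK t
    obtain ⟨c, hc⟩ := exists_dvd_sub_mul_pow_succ hres hbt hxk
    exact ⟨k + b * c, K.add_mem hk (K.mul_mem_right c hb), by rwa [← sub_sub]⟩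

end Associated

lemma Ideal.exists_comap_map_pow_add_le {R A : Type*} [CommRing R] [CommRing A] [Algebra R A]
    [IsNoetherianRing R] [Module.Finite R A] (hinj : Function.Injective (algebraMap R A))
    (𝔞 : Ideal R) :
    ∃ c, ∀ v, ((𝔞 ^ (v + c)).map (algebraMap R A)).comap (algebraMap R A) ≤ 𝔞 ^ v := by
  set ι := Algebra.linearMap R A
  obtain ⟨c, hc⟩ := 𝔞.exists_pow_inf_eq_pow_smul (LinearMap.range ι)
  refine ⟨c, fun v y hy => ?_⟩
  have hy' : ι y ∈ (𝔞 ^ (v + c) • ⊤ ⊓ LinearMap.range ι : Submodule R A) :=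
    ⟨by rw [Ideal.smul_top_eq_map]; exact hy, y, rfl⟩
  rw [hc (v + c) le_add_self, Nat.add_sub_cancel] at hy'
  obtain ⟨w, hw, hwy⟩ : ι y ∈ (𝔞 ^ v • ⊤ : Submodule R R).map ι := by
    rw [Submodule.map_smul'', Submodule.map_top]
    exact Submodule.smul_mono le_rfl inf_le_right hy'
  rw [← hinj hwy]
  simpa using hw

lemma Ideal.mem_of_forall_exists_sub_mem_pow {R : Type*} [CommRing R] {𝔞 K : Ideal R}
    [IsHausdorff 𝔞 (R ⧸ K)] {x : R} (h : ∀ v, ∃ k ∈ K, x - k ∈ 𝔞 ^ v) : x ∈ K := by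
  rw [← Ideal.Quotient.eq_zero_iff_mem]
  refine IsHausdorff.haus ‹_› _ fun v => ?_
  obtain ⟨k, hk, hxk⟩ := h v
  have : Ideal.Quotient.mk K x = (x - k) • 1 := by
    rw [Algebra.smul_def, mul_one, Ideal.Quotient.algebraMap_eq, map_sub,
      Ideal.Quotient.eq_zero_iff_mem.mpr hk, sub_zero]
  rw [SModEq.zero, this]
  exact Submodule.smul_mem_smul hxk Submodule.mem_top

section Domain

variable {R A : Type*} [CommRing R] [CommRing A] [IsDomain A] [Algebra R A] {s : A}

lemma mem_gammaSet_iff {e n i : ℕ} {I : Ideal R} :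
    i ∈ gammaSet e s n I ↔
      1 ≤ i ∧ i < e ∧ ∃ a ∈ I, Associated (algebraMap R A a) (s ^ (n + i)) := by
  simp only [gammaSet, Set.mem_ofPred_eq, Ideal.span_singleton_eq_span_singleton]

lemma add_mem_gammaSet_mul {e n m i j : ℕ} {I J : Ideal R} {a b : R} (ha : a ∈ I) (hb : b ∈ J)
    (hai : Associated (algebraMap R A a) (s ^ (n + i)))
    (hbj : Associated (algebraMap R A b) (s ^ (m + j))) (hij : 1 ≤ i + j) (hije : i + j < e) :
    i + j ∈ gammaSet e s (n + m) (I * J) := by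
  refine mem_gammaSet_iff.mpr ⟨hij, hije, a * b, Ideal.mul_mem_mul ha hb, ?_⟩
  rw [map_mul, show n + m + (i + j) = n + i + (m + j) by omega, pow_add]
  exact hai.mul_mul hbj

end Domain

section DiscreteValuationRing

variable {R A : Type*} [CommRing R] [CommRing A] [IsDomain A] [IsDiscreteValuationRing A]
  [Algebra R A] {s : A}

lemma exists_mem_associated_pow_of_map_eq (hs : Irreducible s) {I : Ideal R} {k : ℕ}
    (h : I.map (algebraMap R A) = Ideal.span {s ^ k}) :
    ∃ a ∈ I, Associated (algebraMap R A a) (s ^ k) := by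
  by_contra! hI
  suffices I.map (algebraMap R A) ≤ Ideal.span {s ^ (k + 1)} by
    rw [h, Ideal.span_singleton_le_span_singleton] at this
    exact hs.not_isUnit (isUnit_of_dvd_one
      ((mul_dvd_mul_iff_left (pow_ne_zero k hs.ne_zero)).mp (by simpa [pow_succ] using this)))
  rw [Ideal.map_le_iff_le_comap]
  intro a ha
  obtain ⟨c, hc⟩ := Ideal.mem_span_singleton.mp (h ▸ Ideal.mem_map_of_mem _ ha)
  have hc' : c ∈ maximalIdeal A := fun hu => hI a ha (hc ▸ associated_mul_unit_left _ c hu)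
  rw [(IsDiscreteValuationRing.irreducible_iff_uniformizer s).mp hs,
    Ideal.mem_span_singleton] at hc'
  rw [Ideal.mem_comap, Ideal.mem_span_singleton, hc, pow_succ]
  exact mul_dvd_mul_left _ hc'

lemma eq_comap_map_of_gammaSet_eq [IsNoetherianRing R] [IsLocalRing R] [Module.Finite R A]
    (hinj : Function.Injective (algebraMap R A))
    (hres : ∀ y : A, ∃ x : R, y - algebraMap R A x ∈ maximalIdeal A) (hs : Irreducible s)
    {e : ℕ} (he : (maximalIdeal R).map (algebraMap R A) = Ideal.span {s ^ e})
    {K : Ideal R} {N : ℕ} (hK : K.map (algebraMap R A) = Ideal.span {s ^ N})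
    (hγ : gammaSet e s N K = {i | 1 ≤ i ∧ i < e}) :
    K = (K.map (algebraMap R A)).comap (algebraMap R A) := by
  have hres' (y : A) : ∃ x : R, s ∣ y - algebraMap R A x := by
    simpa [(IsDiscreteValuationRing.irreducible_iff_uniformizer s).mp hs,
      Ideal.mem_span_singleton] using hres y
  -- with integrality, this makes `algebraMap R A` a local homomorphism
  have : FaithfulSMul R A := (faithfulSMul_iff_algebraMap_injective R A).mpr hinj
  have he0 : e ≠ 0 := by
    rintro rfl
    have := map_maximalIdeal_le (algebraMap R A)
    rw [he, pow_zero, Ideal.span_singleton_one, top_le_iff] at this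
    exact (maximalIdeal.isMaximal A).ne_top this
  obtain ⟨z, -, hz⟩ := exists_mem_associated_pow_of_map_eq hs he
  have hKorders : ∀ t, ∃ b ∈ K, Associated (algebraMap R A b) (s ^ (N + t)) := by
    refine exists_mem_associated_pow_add (Nat.pos_of_ne_zero he0) hz fun i hi => ?_
    rcases Nat.eq_zero_or_pos i with rfl | hi0
    · simpa using exists_mem_associated_pow_of_map_eq hs hK
    · exact (mem_gammaSet_iff.mp (hγ ▸ ⟨hi0, hi⟩ : i ∈ gammaSet e s N K)).2.2
  obtain ⟨c, hc⟩ := (maximalIdeal R).exists_comap_map_pow_add_le hinj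
  refine le_antisymm Ideal.le_comap_map fun x hx =>
    Ideal.mem_of_forall_exists_sub_mem_pow (𝔞 := maximalIdeal R) fun v => ?_
  rw [Ideal.mem_comap, hK, Ideal.mem_span_singleton] at hx
  obtain ⟨k, hk, hxk⟩ := exists_mem_dvd_sub_pow_add hres' hKorders hx (e * (v + c))
  refine ⟨k, hk, hc v ?_⟩
  rw [Ideal.mem_comap, Ideal.map_pow, he, Ideal.span_singleton_pow, ← pow_mul,
    Ideal.mem_span_singleton]
  exact (pow_dvd_pow s (Nat.le_add_left _ _)).trans hxk

end DiscreteValuationRing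

theorem setup_5_3_general {R Rbar : Type*} [CommRing R] [IsNoetherianRing R]
    [IsLocalRing R] [CommRing Rbar] [IsDomain Rbar] [IsDiscreteValuationRing Rbar]
    [Algebra R Rbar] [Module.Finite R Rbar]
    (hinj : Function.Injective (algebraMap R Rbar))
    (hres : ∀ y : Rbar, ∃ x : R, y - algebraMap R Rbar x ∈ IsLocalRing.maximalIdeal Rbar)
    (s : Rbar) (hs : Irreducible s) (e : ℕ)
    (he : Ideal.map (algebraMap R Rbar) (IsLocalRing.maximalIdeal R) = Ideal.span {s ^ e})
    (I J : Ideal R) (n m : ℕ)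
    (hIn : Ideal.map (algebraMap R Rbar) I = Ideal.span {s ^ n})
    (hJm : Ideal.map (algebraMap R Rbar) J = Ideal.span {s ^ m}) :
    gammaSet e s n I ⊆ gammaSet e s (n + m) (I * J) ∧
    gammaSet e s m J ⊆ gammaSet e s (n + m) (I * J) ∧
    (∀ i ∈ gammaSet e s n I, ∀ j ∈ gammaSet e s m J, i + j ≤ e - 1 →
      i + j ∈ gammaSet e s (n + m) (I * J)) ∧
    (gammaSet e s n I = {i | 1 ≤ i ∧ i < e} →
      gammaSet e s (n + m) (I * J) = {i | 1 ≤ i ∧ i < e} ∧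
      I * J = Ideal.comap (algebraMap R Rbar) (Ideal.map (algebraMap R Rbar) (I * J))) := by
  obtain ⟨a₀, ha₀, ha₀n⟩ := exists_mem_associated_pow_of_map_eq hs hIn
  obtain ⟨b₀, hb₀, hb₀m⟩ := exists_mem_associated_pow_of_map_eq hs hJm
  have hleft : gammaSet e s n I ⊆ gammaSet e s (n + m) (I * J) := fun i hi => by
    obtain ⟨hi1, hie, a, ha, hai⟩ := mem_gammaSet_iff.mp hi
    simpa using add_mem_gammaSet_mul (j := 0) ha hb₀ hai hb₀m hi1 hie
  have hright : gammaSet e s m J ⊆ gammaSet e s (n + m) (I * J) := fun j hj => by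
    obtain ⟨hj1, hje, b, hb, hbj⟩ := mem_gammaSet_iff.mp hj
    simpa using add_mem_gammaSet_mul (i := 0) ha₀ hb ha₀n hbj (by omega) (by omega)
  refine ⟨hleft, hright, fun i hi j hj hij => ?_, fun hγ => ?_⟩
  · obtain ⟨hi1, -, a, ha, hai⟩ := mem_gammaSet_iff.mp hi
    obtain ⟨-, -, b, hb, hbj⟩ := mem_gammaSet_iff.mp hj
    exact add_mem_gammaSet_mul ha hb hai hbj (by omega) (by omega)
  have hγIJ : gammaSet e s (n + m) (I * J) = {i | 1 ≤ i ∧ i < e} :=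
    Set.Subset.antisymm (fun _ hi => ⟨hi.1, hi.2.1⟩) (hγ ▸ hleft)
  have hIJ : (I * J).map (algebraMap R Rbar) = Ideal.span {s ^ (n + m)} := by
    rw [Ideal.map_mul, hIn, hJm, Ideal.span_singleton_mul_span_singleton, pow_add]
  exact ⟨hγIJ, eq_comap_map_of_gammaSet_eq hinj hres hs he hIJ hγIJ⟩

/-- Setup 5.3(3): let `R` be a one-dimensional Noetherian local domain whose integral
closure `R̄` is a DVR with uniformizer `s`, a finite `R`-module, with the same residue
field, and `mR̄ = s^e R̄` (`e` the multiplicity).  For nonzero ideals `I`, `J` with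
`IR̄ = s^n R̄`, `JR̄ = s^m R̄`, the set `γ(IJ)` contains `γ(I)`, `γ(J)`, and all sums
`i + j ≤ e - 1` with `i ∈ γ(I)`, `j ∈ γ(J)`.  In particular if `γ(I) = {1,…,e-1}` then
`γ(IJ) = {1,…,e-1}` and `IJ` is integrally closed (`IJ = IJ·R̄ ∩ R`). -/
theorem setup_5_3 {R Rbar : Type*} [CommRing R] [IsDomain R] [IsNoetherianRing R]
    [IsLocalRing R] [CommRing Rbar] [IsDomain Rbar] [IsDiscreteValuationRing Rbar]
    [Algebra R Rbar] [Module.Finite R Rbar] [Algebra.IsIntegral R Rbar]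
    (hinj : Function.Injective (algebraMap R Rbar))
    (hdim : ringKrullDim R = 1)
    (hres : ∀ y : Rbar, ∃ x : R, y - algebraMap R Rbar x ∈ IsLocalRing.maximalIdeal Rbar)
    (s : Rbar) (hs : Irreducible s) (e : ℕ)
    (he : Ideal.map (algebraMap R Rbar) (IsLocalRing.maximalIdeal R) = Ideal.span {s ^ e})
    (I J : Ideal R) (hI : I ≠ ⊥) (hJ : J ≠ ⊥) (n m : ℕ)
    (hIn : Ideal.map (algebraMap R Rbar) I = Ideal.span {s ^ n})
    (hJm : Ideal.map (algebraMap R Rbar) J = Ideal.span {s ^ m}) :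
    gammaSet e s n I ⊆ gammaSet e s (n + m) (I * J) ∧
    gammaSet e s m J ⊆ gammaSet e s (n + m) (I * J) ∧
    (∀ i ∈ gammaSet e s n I, ∀ j ∈ gammaSet e s m J, i + j ≤ e - 1 →
      i + j ∈ gammaSet e s (n + m) (I * J)) ∧
    (gammaSet e s n I = {i | 1 ≤ i ∧ i < e} →
      gammaSet e s (n + m) (I * J) = {i | 1 ≤ i ∧ i < e} ∧
      I * J = Ideal.comap (algebraMap R Rbar) (Ideal.map (algebraMap R Rbar) (I * J))) :=
  setup_5_3_general hinj hres s hs e he I J n m hIn hJm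
end
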